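/- arXiv:2006.00187 — 2 statements merged into one kernel-verified Lean document; each statement's English description precedes it below -/
import Mathlib

section
/- The plane-to-plane cost based on closest-point (CP) vectors is not invariant under rigid changes of the global coordinate system: there exist unit vectors n₁, n₂ ∈ EuclideanSpace ℝ (Fin 3), real numbers d₁, d₂, and a translation u ∈ EuclideanSpace ℝ (Fin 3) such that ‖d₁ • n₁ − d₂ • n₂‖ ≠ ‖(d₁ − ⟪n₁, u⟫) • n₁ − (d₂ − ⟪n₂, u⟫) • n₂‖, where translating the coordinate frame by u changes a plane (n, d) to (n, d − ⟪n, u⟫). -/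
open RealInnerProductSpace

/-- Two planes through the origin have the same closest-point vector `0` whatever their normals;
shifting the frame along the normal of one of them separates the two closest points again. -/
theorem norm_cp_sub_after_translation_along_normal {E : Type*} [NormedAddCommGroup E]
    [InnerProductSpace ℝ E] {n₁ n₂ : E} (h₁ : ‖n₁‖ = 1) (h₁₂ : ⟪n₁, n₂⟫ = 0) :
    ‖(0 - ⟪n₁, n₁⟫) • n₁ - (0 - ⟪n₂, n₁⟫) • n₂‖ = 1 := by
  rw [real_inner_self_eq_norm_sq, real_inner_comm, h₁₂, h₁]
  simp [h₁]

theorem cp_cost_not_translation_invariant :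
    ∃ (n₁ n₂ : EuclideanSpace ℝ (Fin 3)) (d₁ d₂ : ℝ)
      (u : EuclideanSpace ℝ (Fin 3)),
      ‖n₁‖ = 1 ∧ ‖n₂‖ = 1 ∧
      ‖d₁ • n₁ - d₂ • n₂‖ ≠
        ‖(d₁ - (inner ℝ n₁ u : ℝ)) • n₁ - (d₂ - (inner ℝ n₂ u : ℝ)) • n₂‖ := by
  set e := EuclideanSpace.basisFun (Fin 3) ℝ
  have he : Orthonormal ℝ e := e.orthonormal
  refine ⟨e 0, e 1, 0, 0, e 0, he.1 0, he.1 1, ?_⟩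
  rw [norm_cp_sub_after_translation_along_normal (he.1 0) (he.2 (by decide))]
  simp
end

section
/- (Theorem 1) Let ι be a finite index type, m a natural number, and K : ι → ℕ. For each i : ι, let C i : Matrix (Fin (K i)) (Fin 13) ℝ, Q i : Matrix (Fin (K i)) (Fin 4) ℝ, M i : Matrix (Fin 4) (Fin 13) ℝ satisfy C i = Q i * M i and (Q i)ᵀ * (Q i) = 1, and let W i : Matrix (Fin 13) (Fin m) ℝ and ν i : Fin 13 → ℝ. Define A = ∑ i, ((C i) * (W i))ᵀ * ((C i) * (W i)), b = ∑ i, ((C i) * (W i))ᵀ *ᵥ ((C i) *ᵥ (ν i)), and Aʳ, bʳ analogously with M i in place of C i. Then for every λ : ℝ and every ξ : Fin m → ℝ, (A + λ • 1) *ᵥ ξ = −b if and only if (Aʳ + λ • 1) *ᵥ ξ = −bʳ; that is, the reduced Jacobian and reduced residual may replace the full Jacobian and residual in the Levenberg–Marquardt normal equations (JᵀJ + λI)ξ = −Jᵀδ without changing the solution set. -/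
/-! Multiplying a matrix on the left by one with orthonormal columns leaves its Gram matrix
`Mᵀ * M` unchanged. The normal-equation data `JᵀJ` and `Jᵀδ` depend on each observation matrix
`C i = Q i * M i` only through `(C i)ᵀ * C i = (M i)ᵀ * M i`, so the full and reduced systems
have the same matrix and right-hand side. -/

open Matrix

namespace Matrix

variable {R : Type*} [CommSemiring R] {k l n p : Type*} [Fintype k] [Fintype l]

theorem transpose_mul_self_mul_left_of_transpose_mul_self_eq_one [DecidableEq l]
    {Q : Matrix k l R} (hQ : Qᵀ * Q = 1) (M : Matrix l n R) :
    (Q * M)ᵀ * (Q * M) = Mᵀ * M := by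
  rw [transpose_mul, Matrix.mul_assoc, ← Matrix.mul_assoc Qᵀ, hQ, Matrix.one_mul]

variable [Fintype n] {C : Matrix k n R} {M : Matrix l n R}

theorem transpose_mul_self_mul_right_eq (hCM : Cᵀ * C = Mᵀ * M) (W : Matrix n p R) :
    (C * W)ᵀ * (C * W) = (M * W)ᵀ * (M * W) := by
  rw [transpose_mul, transpose_mul, Matrix.mul_assoc, Matrix.mul_assoc, ← Matrix.mul_assoc Cᵀ, hCM,
    Matrix.mul_assoc]

theorem transpose_mul_mulVec_mulVec_eq (hCM : Cᵀ * C = Mᵀ * M) (W : Matrix n p R)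
    (v : n → R) : (C * W)ᵀ *ᵥ (C *ᵥ v) = (M * W)ᵀ *ᵥ (M *ᵥ v) := by
  simp only [transpose_mul, mulVec_mulVec, Matrix.mul_assoc, hCM]

end Matrix

theorem theorem1_reduced_LM_step
    (ι : Type*) [Fintype ι] (m : ℕ) (K : ι → ℕ)
    (C : ∀ i, Matrix (Fin (K i)) (Fin 13) ℝ)
    (Q : ∀ i, Matrix (Fin (K i)) (Fin 4) ℝ)
    (M : ∀ i, Matrix (Fin 4) (Fin 13) ℝ)
    (hC : ∀ i, C i = Q i * M i) (hQ : ∀ i, (Q i)ᵀ * (Q i) = 1)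
    (W : ∀ i, Matrix (Fin 13) (Fin m) ℝ) (ν : ∀ i, Fin 13 → ℝ)
    (A : Matrix (Fin m) (Fin m) ℝ)
    (hA : A = ∑ i, ((C i) * (W i))ᵀ * ((C i) * (W i)))
    (b : Fin m → ℝ)
    (hb : b = ∑ i, ((C i) * (W i))ᵀ *ᵥ ((C i) *ᵥ (ν i)))
    (Ar : Matrix (Fin m) (Fin m) ℝ)
    (hAr : Ar = ∑ i, ((M i) * (W i))ᵀ * ((M i) * (W i)))
    (br : Fin m → ℝ)
    (hbr : br = ∑ i, ((M i) * (W i))ᵀ *ᵥ ((M i) *ᵥ (ν i))) :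
    ∀ (lam : ℝ) (ξ : Fin m → ℝ),
      (A + lam • 1) *ᵥ ξ = -b ↔ (Ar + lam • 1) *ᵥ ξ = -br := by
  have hCM : ∀ i, (C i)ᵀ * C i = (M i)ᵀ * M i := fun i => by
    rw [hC i, transpose_mul_self_mul_left_of_transpose_mul_self_eq_one (hQ i)]
  have hA_eq : A = Ar := by
    rw [hA, hAr]
    exact Finset.sum_congr rfl fun i _ => transpose_mul_self_mul_right_eq (hCM i) (W i)
  have hb_eq : b = br := by
    rw [hb, hbr]
    exact Finset.sum_congr rfl fun i _ => transpose_mul_mulVec_mulVec_eq (hCM i) (W i) (ν i)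
  intro lam ξ
  rw [hA_eq, hb_eq]
end
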